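/- arXiv:2207.08007 — 7 statements merged into one kernel-verified Lean document; each statement's English description precedes it below -/
import Mathlib

section
/- Let D be a digraph, let P be a directed path of D, and let v be a vertex of D not on P. If v is adjacent (in the underlying graph of D) to every vertex of P, then D has a directed path P' whose vertex set is V(P) ∪ {v}. -/
/-- A directed path in a digraph with arc relation `A`: a nonempty list of distinct
vertices each of which dominates the next. -/
def IsDipath {V : Type*} (A : V → V → Prop) (p : List V) : Prop :=
  p ≠ [] ∧ p.Nodup ∧ p.Chain' A

/-- A path partition of the digraph `(V, A)`: a collection of vertex-disjoint directed
paths covering all of `V`. -/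
def IsPathPartition {V : Type*} (A : V → V → Prop) (P : Set (List V)) : Prop :=
  (∀ p ∈ P, IsDipath A p) ∧
  (∀ p ∈ P, ∀ q ∈ P, p ≠ q → ∀ v : V, v ∈ p → v ∉ q) ∧
  (∀ v : V, ∃ p ∈ P, v ∈ p)

/-- A path partition `P` and a stable set `S` are orthogonal if every path of `P`
contains exactly one vertex of `S`. -/
def OrthogonalPP {V : Type*} (P : Set (List V)) (S : Set V) : Prop :=
  ∀ p ∈ P, ∃! v : V, v ∈ S ∧ v ∈ p

/-! Insert `v` just before the first vertex `u` of the path with an arc `v → u`; every vertex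
before `u` then has an arc to `v`, in particular the one immediately before it. -/

/-- The head of the new chain is `v` or the old head, which is what lets the induction
prepend the old first vertex again. -/
theorem List.exists_perm_cons_isChain_of_forall_adj {V : Type*} {A : V → V → Prop} {v : V} :
    ∀ {p : List V}, p.IsChain A → (∀ u ∈ p, A u v ∨ A v u) →
      ∃ q : List V, q.Perm (v :: p) ∧ q.IsChain A ∧ (q.head? = p.head? ∨ q.head? = some v)
  | [], _, _ => ⟨[v], List.Perm.refl _, List.isChain_singleton v, Or.inr rfl⟩
  | a :: rest, hch, hadj => by
    rcases hadj a List.mem_cons_self with hav | hva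
    · obtain ⟨q, hperm, hq, hhead⟩ := exists_perm_cons_isChain_of_forall_adj hch.tail
        fun u hu => hadj u (List.mem_cons_of_mem a hu)
      refine ⟨a :: q, (hperm.cons a).trans (List.Perm.swap v a rest), ?_, Or.inl rfl⟩
      refine List.isChain_cons.2 ⟨fun y hy => ?_, hq⟩
      rcases hhead with hhead | hhead
      · exact (List.isChain_cons.1 hch).1 y (hhead ▸ hy)
      · rw [hhead, Option.mem_some_iff] at hy
        exact hy ▸ hav
    · exact ⟨v :: a :: rest, List.Perm.refl _, List.isChain_cons_cons.2 ⟨hva, hch⟩, Or.inr rfl⟩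

theorem stmt_0_general {V : Type*} (A : V → V → Prop)
    (p : List V) (hp : IsDipath A p) (v : V) (hv : v ∉ p)
    (hadj : ∀ u ∈ p, A u v ∨ A v u) :
    ∃ p' : List V, IsDipath A p' ∧ ∀ u : V, u ∈ p' ↔ (u ∈ p ∨ u = v) := by
  obtain ⟨-, hnd, hch⟩ := hp
  obtain ⟨q, hperm, hq, -⟩ := List.exists_perm_cons_isChain_of_forall_adj hch hadj
  refine ⟨q, ⟨?_, hperm.nodup_iff.2 (List.nodup_cons.2 ⟨hv, hnd⟩), hq⟩, fun u => ?_⟩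
  · exact List.ne_nil_of_mem (hperm.mem_iff.2 List.mem_cons_self)
  · rw [hperm.mem_iff, List.mem_cons, or_comm]

/-- if `v` is off the directed path `p` and adjacent (in the underlying
graph) to every vertex of `p`, then there is a directed path on `V(p) ∪ {v}`. -/
theorem stmt_0 {V : Type*} [Fintype V] (A : V → V → Prop) (hirr : ∀ w : V, ¬ A w w)
    (p : List V) (hp : IsDipath A p) (v : V) (hv : v ∉ p)
    (hadj : ∀ u ∈ p, A u v ∨ A v u) :
    ∃ p' : List V, IsDipath A p' ∧ ∀ u : V, u ∈ p' ↔ (u ∈ p ∨ u = v) :=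
  stmt_0_general A p hp v hv hadj
end

section
/- Let k ≥ 3 and let G be the complement of the odd cycle C_{2k+1}, with vertices x_0,…,x_{2k} labeled so that x_i and x_j are adjacent in G if and only if j − i ≢ ±1 (mod 2k+1). Fix i, and let G' be the graph obtained from G by deleting the two (non-adjacent) vertices x_i and x_{i+1} and deleting the edge x_{i−1}x_{i+2} (indices modulo 2k+1). Then G' is isomorphic to the complement of the odd cycle C_{2k−1}; indeed G' is the complement of the cycle (x_0,…,x_{i−1}, x_{i+2},…,x_{2k}, x_0). -/
/-!
The rotation `v ↦ v - (i + 2)` is an automorphism of `C_{2k+1}` that sends `x_{i+2}, …, x_{i-1}`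
to `0, …, 2k - 2`. On these vertices `C_{2k+1}` induces the path `0 — 1 — ⋯ — (2k - 2)`, and this
path together with the image `{2k - 2, 0}` of the deleted edge `x_{i-1}x_{i+2}` is `C_{2k-1}`.
Taking complements gives the isomorphism.
-/

open SimpleGraph

theorem Fin.castAdd_two_last_add_three (n : ℕ) :
    (Fin.castAdd 2 (Fin.last n) : Fin (n + 3)) + 3 = 0 := by
  ext
  simp [Fin.val_add]

theorem Fin.exists_castAdd_two_eq_iff {n : ℕ} (x : Fin (n + 3)) :
    (∃ a : Fin (n + 1), Fin.castAdd 2 a = x) ↔ x + 2 ≠ 0 ∧ x + 2 ≠ 1 := by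
  have hx := x.isLt
  have hrange : (∃ a : Fin (n + 1), Fin.castAdd 2 a = x) ↔ x.val < n + 1 :=
    ⟨fun ⟨a, ha⟩ => ha ▸ a.isLt, fun h => ⟨x.castLT h, Fin.castAdd_castLT 2 x h⟩⟩
  rw [hrange]
  simp only [ne_eq, Fin.ext_iff, Fin.val_add_eq_ite, Fin.val_zero, Fin.val_one, Fin.val_two]
  by_cases h : n + 3 ≤ x.val + 2 <;> simp only [h, if_true, if_false] <;> omega

namespace SimpleGraph

theorem cycleGraph_adj_add_right {n : ℕ} [NeZero n] {u v : Fin n} (c : Fin n) :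
    (cycleGraph n).Adj (u + c) (v + c) ↔ (cycleGraph n).Adj u v := by
  simp only [cycleGraph_adj', add_sub_add_right_eq_sub]

theorem cycleGraph_eq_pathGraph_sup_edge (n : ℕ) :
    cycleGraph (n + 1) = pathGraph (n + 1) ⊔ edge 0 (Fin.last n) := by
  ext u v
  rw [cycleGraph_adj', sup_adj, pathGraph_adj, edge_adj]
  simp only [Fin.ext_iff, Fin.val_zero, Fin.val_last]
  rcases le_or_gt u v with huv | huv <;> rcases le_or_gt v u with hvu | hvu <;>
    simp only [Fin.coe_sub_iff_le.mpr, Fin.coe_sub_iff_lt.mpr, *] <;> omega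

theorem cycleGraph_adj_castAdd {m : ℕ} {a b : Fin m} :
    (cycleGraph (m + 2)).Adj (Fin.castAdd 2 a) (Fin.castAdd 2 b) ↔ (pathGraph m).Adj a b := by
  rw [cycleGraph_eq_pathGraph_sup_edge, sup_adj, edge_adj, pathGraph_adj, pathGraph_adj]
  simp only [Fin.ext_iff, Fin.val_castAdd, Fin.val_zero, Fin.val_last]
  omega

def complCycleGraphEmbedding (n : ℕ) (i : Fin (n + 3)) :
    (cycleGraph (n + 1))ᶜ ↪g (cycleGraph (n + 3))ᶜ.deleteEdges {s(i - 1, i + 2)} where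
  toFun a := Fin.castAdd 2 a + (i + 2)
  inj' := (add_left_injective _).comp (Fin.castAdd_injective _ _)
  map_rel_iff' {a b} := by
    have hedge : s(i - 1, i + 2) =
        s(Fin.castAdd 2 (Fin.last n) + (i + 2), Fin.castAdd 2 0 + (i + 2)) := by
      rw [eq_neg_of_add_eq_zero_left (Fin.castAdd_two_last_add_three n)]
      congr 1
      · open Fin.CommRing in ring
      · exact (zero_add _).symm
    rw [Function.Embedding.coeFn_mk, deleteEdges_adj, compl_adj, compl_adj,
      cycleGraph_adj_add_right, cycleGraph_adj_castAdd, cycleGraph_eq_pathGraph_sup_edge, sup_adj,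
      edge_adj, Set.mem_singleton_iff, hedge]
    simp only [Sym2.eq_iff, add_left_inj, Fin.castAdd_inj, ne_eq]
    tauto

theorem range_complCycleGraphEmbedding (n : ℕ) (i : Fin (n + 3)) :
    Set.range (complCycleGraphEmbedding n i) = {v | v ≠ i ∧ v ≠ i + 1} := by
  ext v
  obtain ⟨x, rfl⟩ : ∃ x, x + (i + 2) = v := ⟨v - (i + 2), sub_add_cancel _ _⟩
  have hshift (c : Fin (n + 3)) : x + (i + 2) = i + c ↔ x + 2 = c := by
    open Fin.CommRing in constructor <;> intro h <;> linear_combination h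
  change (∃ a, Fin.castAdd 2 a + (i + 2) = x + (i + 2)) ↔ x + (i + 2) ≠ i ∧ x + (i + 2) ≠ i + 1
  simp only [add_left_inj, Fin.exists_castAdd_two_eq_iff, ne_eq]
  rw [← hshift 0, ← hshift 1, add_zero]

noncomputable def complCycleGraphDeleteIso (n : ℕ) (i : Fin (n + 3)) :
    ((cycleGraph (n + 3))ᶜ.deleteEdges {s(i - 1, i + 2)}).induce {v | v ≠ i ∧ v ≠ i + 1} ≃g
      (cycleGraph (n + 1))ᶜ :=
  (range_complCycleGraphEmbedding n i ▸ (complCycleGraphEmbedding n i).isoInduceRange).symm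

end SimpleGraph

/-- for `k ≥ 3`, deleting from `G = (C_{2k+1})ᶜ` the two non-adjacent
vertices `x_i, x_{i+1}` and the edge `x_{i-1}x_{i+2}` yields a graph isomorphic to
`(C_{2k-1})ᶜ`. -/
theorem stmt_2 (k : ℕ) (hk : 3 ≤ k) (i : Fin (2*k+1)) :
    Nonempty
      (((((cycleGraph (2*k+1))ᶜ).deleteEdges {s(i - 1, i + 2)}).induce
          {v : Fin (2*k+1) | v ≠ i ∧ v ≠ i + 1}) ≃g (cycleGraph (2*k-1))ᶜ) := by
  obtain ⟨m, rfl⟩ : ∃ m, k = m + 1 := ⟨k - 1, by omega⟩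
  -- `2 * (m + 1) + 1` and `2 * (m + 1) - 1` reduce to `2 * m + 3` and `2 * m + 1`
  exact ⟨complCycleGraphDeleteIso (2 * m) i⟩
end

section
/- Let k ≥ 3 and let D be a super-orientation of the complement of C_{2k+1}, with vertices labeled x_0,…,x_{2k} so that x_i and x_j are adjacent in the underlying graph if and only if j − i ≢ ±1 (mod 2k+1). Let D' be the digraph obtained from D by deleting the vertices x_{2k−1} and x_{2k} and deleting every arc between x_0 and x_{2k−2} (so D' is a super-orientation of the complement of C_{2k−1}). If D' has a path partition orthogonal to {x_0, x_{2k−2}}, then D has a path partition orthogonal to {x_0, x_{2k}}. -/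
/-- A directed path of the subdigraph induced by the vertex set `W`. -/
def IsDipathOn {V : Type*} (A : V → V → Prop) (W : Set V) (p : List V) : Prop :=
  p ≠ [] ∧ p.Nodup ∧ (∀ v ∈ p, v ∈ W) ∧ p.Chain' A

/-- A path partition of the subdigraph induced by the vertex set `W`. -/
def IsPathPartitionOn {V : Type*} (A : V → V → Prop) (W : Set V) (P : Set (List V)) : Prop :=
  (∀ p ∈ P, IsDipathOn A W p) ∧
  (∀ p ∈ P, ∀ q ∈ P, p ≠ q → ∀ v : V, v ∈ p → v ∉ q) ∧
  (∀ v ∈ W, ∃ p ∈ P, v ∈ p)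

/-- A stable set: a set of pairwise non-adjacent vertices. -/
def IsStableSet {V : Type*} (A : V → V → Prop) (S : Set V) : Prop :=
  ∀ u ∈ S, ∀ v ∈ S, u ≠ v → ¬ A u v ∧ ¬ A v u

/-- A digraph is α-diperfect if for every induced subdigraph (on a vertex set `W`) and
every maximum stable set `S` of it, there is a path partition of it orthogonal to `S`. -/
def AlphaDiperfect {V : Type*} (A : V → V → Prop) : Prop :=
  ∀ (W S : Set V), S ⊆ W → IsStableSet A S →
    (∀ T ⊆ W, IsStableSet A T → T.ncard ≤ S.ncard) →
    ∃ P : Set (List V), IsPathPartitionOn A W P ∧ OrthogonalPP P S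


/-!
The partition of `D'` consists of exactly two paths, one through `x_0` and one through
`x_{2k-2}`. In `D`, the vertex `x_{2k-1}` is adjacent to every vertex of the first path and
`x_{2k}` to every vertex of the second. A vertex `w` adjacent to every vertex of a directed
path can always be inserted into it: put `w` right before the first vertex it dominates, or at
the end if there is none.
-/

namespace List

theorem IsChain.exists_perm_cons {V : Type*} {A : V → V → Prop} {w : V} :
    ∀ {p : List V}, p.IsChain A → (∀ v ∈ p, A v w ∨ A w v) →
      ∃ q : List V, q.Perm (w :: p) ∧ q.IsChain A ∧ ∀ y ∈ q.head?, y = w ∨ y ∈ p.head?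
  | [], _, _ => ⟨[w], .refl _, .singleton w, by simp⟩
  | a :: rest, hchain, hadj => by
    rcases hadj a mem_cons_self with haw | hwa
    · obtain ⟨q, hperm, hq, hhead⟩ :=
        hchain.tail.exists_perm_cons fun v hv => hadj v (mem_cons_of_mem a hv)
      refine ⟨a :: q, (hperm.cons a).trans (.swap w a rest), List.isChain_cons.mpr ⟨?_, hq⟩,
        by simp⟩
      intro y hy
      rcases hhead y hy with rfl | hy'
      · exact haw
      · cases rest with
        | nil => simp at hy'
        | cons b t =>
          obtain rfl : b = y := by simpa using hy'
          exact (isChain_cons_cons.mp hchain).1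
    · exact ⟨w :: a :: rest, .refl _, hchain.cons_cons hwa, by simp⟩

end List

section PathPartitions

variable {V : Type*} {A : V → V → Prop}

theorem IsDipath.exists_perm_cons {p : List V} {w : V} (hp : IsDipath A p) (hw : w ∉ p)
    (hadj : ∀ v ∈ p, A v w ∨ A w v) : ∃ q : List V, q.Perm (w :: p) ∧ IsDipath A q := by
  obtain ⟨q, hperm, hq, -⟩ := hp.2.2.exists_perm_cons hadj
  exact ⟨q, hperm, fun h => by simpa [h] using hperm.length_eq,
    hperm.nodup_iff.mpr (List.nodup_cons.mpr ⟨hw, hp.2.1⟩), hq⟩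

theorem IsDipathOn.isDipath_of_le {A' : V → V → Prop} {W : Set V} {p : List V}
    (hp : IsDipathOn A' W p) (hA : ∀ u v, A' u v → A u v) : IsDipath A p :=
  ⟨hp.1, hp.2.1, hp.2.2.2.imp fun u v => hA u v⟩

theorem IsPathPartitionOn.exists_pair_of_orthogonalPP {W : Set V} {P : Set (List V)} {x y : V}
    (hP : IsPathPartitionOn A W P) (horth : OrthogonalPP P {x, y}) (hxy : x ≠ y)
    (hx : x ∈ W) (hy : y ∈ W) :
    ∃ p q, IsDipathOn A W p ∧ IsDipathOn A W q ∧ p.Disjoint q ∧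
      (∀ v ∈ W, v ∈ p ∨ v ∈ q) ∧ x ∈ p ∧ y ∈ q := by
  obtain ⟨hpaths, hdisj, hcover⟩ := hP
  obtain ⟨p, hp, hxp⟩ := hcover x hx
  obtain ⟨q, hq, hyq⟩ := hcover y hy
  have hpq : p ≠ q := by
    rintro rfl
    obtain ⟨v, -, huniq⟩ := horth p hp
    exact hxy ((huniq x ⟨.inl rfl, hxp⟩).trans (huniq y ⟨.inr rfl, hyq⟩).symm)
  have hPpq : ∀ r ∈ P, r = p ∨ r = q := by
    intro r hr
    obtain ⟨v, ⟨rfl | rfl, hvr⟩, -⟩ := horth r hr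
    · exact .inl (by_contra fun hrp => hdisj r hr p hp hrp v hvr hxp)
    · exact .inr (by_contra fun hrq => hdisj r hr q hq hrq v hvr hyq)
  refine ⟨p, q, hpaths p hp, hpaths q hq, fun v hvp hvq => hdisj p hp q hq hpq v hvp hvq,
    fun v hv => ?_, hxp, hyq⟩
  obtain ⟨r, hr, hvr⟩ := hcover v hv
  rcases hPpq r hr with rfl | rfl
  exacts [.inl hvr, .inr hvr]

theorem isPathPartition_pair {p q : List V} (hp : IsDipath A p) (hq : IsDipath A q)
    (hpq : p.Disjoint q) (hcover : ∀ v, v ∈ p ∨ v ∈ q) : IsPathPartition A {p, q} := by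
  refine ⟨by rintro r (rfl | rfl) <;> assumption, ?_, fun v => ?_⟩
  · rintro r (rfl | rfl) s (rfl | rfl) hrs v hvr hvs
    exacts [hrs rfl, hpq hvr hvs, hpq hvs hvr, hrs rfl]
  · rcases hcover v with h | h
    exacts [⟨p, .inl rfl, h⟩, ⟨q, .inr rfl, h⟩]

theorem orthogonalPP_pair {p q : List V} {x y : V} (hxp : x ∈ p) (hxq : x ∉ q)
    (hyq : y ∈ q) (hyp : y ∉ p) : OrthogonalPP {p, q} {x, y} := by
  rintro r (rfl | rfl)
  · exact ⟨x, ⟨.inl rfl, hxp⟩, by rintro v ⟨rfl | rfl, hv⟩ <;> trivial⟩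
  · exact ⟨y, ⟨.inr rfl, hyq⟩, by rintro v ⟨rfl | rfl, hv⟩ <;> trivial⟩

end PathPartitions

theorem ZMod.natCast_ne_natCast_of_lt {n i j : ℕ} (hi : i < n) (hj : j < n) (hij : i ≠ j) :
    (i : ZMod n) ≠ j :=
  fun h => hij <| by rw [← ZMod.val_natCast_of_lt hi, h, ZMod.val_natCast_of_lt hj]

theorem adj_or_adj_of_ne_pred_succ {R : Type*} [AddCommGroup R] [One R] {A : R → R → Prop}
    (hso : ∀ u v : R, (A u v ∨ A v u) ↔ (u ≠ v ∧ v - u ≠ 1 ∧ u - v ≠ 1)) {a b c v : R}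
    (hab : a + 1 = b) (hbc : b + 1 = c) (hva : v ≠ a) (hvb : v ≠ b) (hvc : v ≠ c) :
    A v b ∨ A b v :=
  (hso v b).2 ⟨hvb, fun h => hva <| add_right_cancel <| hab ▸ (sub_eq_iff_eq_add'.1 h).symm,
    fun h => hvc <| hbc ▸ sub_eq_iff_eq_add'.1 h⟩

theorem exists_orthogonal_pathPartition_of_insert_two {V : Type*} {A A' : V → V → Prop}
    (hA : ∀ u v, A' u v → A u v) {x a b c : V} (hxa : x ≠ a) (hxb : x ≠ b) (hxc : x ≠ c)
    (hab : a ≠ b) (hac : a ≠ c) (hbc : b ≠ c)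
    (hb : ∀ v, v ≠ a → v ≠ b → v ≠ c → A v b ∨ A b v)
    (hc : ∀ v, v ≠ x → v ≠ b → v ≠ c → A v c ∨ A c v) {P' : Set (List V)}
    (hP' : IsPathPartitionOn A' {w | w ≠ b ∧ w ≠ c} P') (horth : OrthogonalPP P' {x, a}) :
    ∃ P, IsPathPartition A P ∧ OrthogonalPP P {x, c} := by
  obtain ⟨p, q, hp, hq, hpq, hcover, hxp, haq⟩ :=
    hP'.exists_pair_of_orthogonalPP horth hxa ⟨hxb, hxc⟩ ⟨hab, hac⟩
  have hbp : b ∉ p := fun h => (hp.2.2.1 b h).1 rfl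
  have hcp : c ∉ p := fun h => (hp.2.2.1 c h).2 rfl
  have hbq : b ∉ q := fun h => (hq.2.2.1 b h).1 rfl
  have hcq : c ∉ q := fun h => (hq.2.2.1 c h).2 rfl
  obtain ⟨p', hpp', hp'⟩ := (hp.isDipath_of_le hA).exists_perm_cons hbp fun v hv =>
    hb v (fun h => hpq (h ▸ hv) haq) (hp.2.2.1 v hv).1 (hp.2.2.1 v hv).2
  obtain ⟨q', hqq', hq'⟩ := (hq.isDipath_of_le hA).exists_perm_cons hcq fun v hv =>
    hc v (fun h => hpq hxp (h ▸ hv)) (hq.2.2.1 v hv).1 (hq.2.2.1 v hv).2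
  have hmem_p' (v : V) : v ∈ p' ↔ v = b ∨ v ∈ p := by rw [hpp'.mem_iff, List.mem_cons]
  have hmem_q' (v : V) : v ∈ q' ↔ v = c ∨ v ∈ q := by rw [hqq'.mem_iff, List.mem_cons]
  refine ⟨{p', q'}, isPathPartition_pair hp' hq' ?_ fun v => ?_, orthogonalPP_pair ?_ ?_ ?_ ?_⟩
  · intro v hvp hvq
    rw [hmem_p'] at hvp
    rw [hmem_q'] at hvq
    rcases hvp with rfl | hvp <;> rcases hvq with rfl | hvq
    exacts [hbc rfl, hbq hvq, hcp hvp, hpq hvp hvq]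
  · have := hcover v
    rw [hmem_p', hmem_q']
    tauto
  all_goals simp only [hmem_p', hmem_q']; tauto

/-- let `D` be a super-orientation of `(C_{2k+1})ᶜ`, `k ≥ 3`, and let `D'`
be obtained from `D` by deleting `x_{2k-1}`, `x_{2k}` and every arc between `x_0` and
`x_{2k-2}`. If `D'` has a path partition orthogonal to `{x_0, x_{2k-2}}`, then `D` has a
path partition orthogonal to `{x_0, x_{2k}}`. -/
theorem stmt_3 (k : ℕ) (hk : 3 ≤ k)
    (A : ZMod (2*k+1) → ZMod (2*k+1) → Prop)
    (hso : ∀ u v : ZMod (2*k+1),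
      (A u v ∨ A v u) ↔ (u ≠ v ∧ v - u ≠ 1 ∧ u - v ≠ 1))
    (h : ∃ P : Set (List (ZMod (2*k+1))),
      IsPathPartitionOn
        (fun u v => A u v ∧
          ¬((u = ((0 : ℕ) : ZMod (2*k+1)) ∧ v = ((2*k-2 : ℕ) : ZMod (2*k+1))) ∨
            (u = ((2*k-2 : ℕ) : ZMod (2*k+1)) ∧ v = ((0 : ℕ) : ZMod (2*k+1)))))
        {w : ZMod (2*k+1) | w ≠ ((2*k-1 : ℕ) : ZMod (2*k+1)) ∧ w ≠ ((2*k : ℕ) : ZMod (2*k+1))}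
        P ∧
      OrthogonalPP P {((0 : ℕ) : ZMod (2*k+1)), ((2*k-2 : ℕ) : ZMod (2*k+1))}) :
    ∃ P : Set (List (ZMod (2*k+1))), IsPathPartition A P ∧
      OrthogonalPP P {((0 : ℕ) : ZMod (2*k+1)), ((2*k : ℕ) : ZMod (2*k+1))} := by
  obtain ⟨P', hP', horth⟩ := h
  have hne {i j : ℕ} (hi : i < 2*k+1) (hj : j < 2*k+1) (hij : i ≠ j) :
      (i : ZMod (2*k+1)) ≠ j :=
    ZMod.natCast_ne_natCast_of_lt hi hj hij
  have hsucc {i j : ℕ} (hij : i + 1 = j) : (i : ZMod (2*k+1)) + 1 = j := by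
    rw [← hij, Nat.cast_succ]
  have hlast : ((2*k : ℕ) : ZMod (2*k+1)) + 1 = ((0 : ℕ) : ZMod (2*k+1)) := by
    rw [← Nat.cast_succ, ZMod.natCast_self, Nat.cast_zero]
  have hab := hsucc (i := 2*k-2) (j := 2*k-1) (by omega)
  have hbc := hsucc (i := 2*k-1) (j := 2*k) (by omega)
  exact exists_orthogonal_pathPartition_of_insert_two (fun _ _ huv => huv.1)
    (hne (by omega) (by omega) (by omega)) (hne (by omega) (by omega) (by omega))
    (hne (by omega) (by omega) (by omega)) (hne (by omega) (by omega) (by omega))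
    (hne (by omega) (by omega) (by omega)) (hne (by omega) (by omega) (by omega))
    (fun _ => adj_or_adj_of_ne_pred_succ hso hab hbc)
    (fun _ hvx hvb hvc => adj_or_adj_of_ne_pred_succ hso hbc hlast hvb hvc hvx) hP' horth
end

section
/- For every k ≥ 2, the digraph D⃗_{2k+1} has no path partition orthogonal to the maximum stable set {x_0, x_{2k}}. -/
/-- The arc relation of the digraph `D⃗_{2k+1}` on vertices `x_0, …, x_{2k}`
(realized as `ZMod (2*k+1)`): the arcs are exactly the pairs `(x_i, x_j)` with
`0 ≤ i < j ≤ 2k`, `j - i ≥ 2` and `(i, j) ≠ (0, 2k)`. -/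
def DvecArc (k : ℕ) (u v : ZMod (2*k+1)) : Prop :=
  u.val + 2 ≤ v.val ∧ ¬(u.val = 0 ∧ v.val = 2*k)

/-!
Every path of an orthogonal partition passes through `x_0` or `x_{2k}`, so the two paths
through these vertices cover all `2k+1` vertices and one of them has at least `k+1` vertices.
Along each arc the index grows by at least `2`, so such a path climbs by at least `2k`:
it must run from `x_0` to `x_{2k}` and so meets the stable set twice.
-/

theorem head_add_mul_le_getLast_of_isChain {V : Type*} (f : V → ℕ) (c : ℕ) :
    ∀ (l : List V) (hl : l ≠ []), l.IsChain (fun u v => f u + c ≤ f v) →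
      f (l.head hl) + c * (l.length - 1) ≤ f (l.getLast hl)
  | [_], _, _ => by simp
  | _ :: b :: t, _, h => by
    rw [List.isChain_cons_cons] at h
    have ih := head_add_mul_le_getLast_of_isChain f c (b :: t) (List.cons_ne_nil b t) h.2
    simp only [List.head_cons, List.getLast_cons_cons, List.length_cons,
      Nat.add_sub_cancel] at ih ⊢
    rw [mul_add_one]
    omega

theorem card_le_length_add_length {V : Type*} [Fintype V] {p q : List V}
    (h : ∀ v, v ∈ p ∨ v ∈ q) : Fintype.card V ≤ p.length + q.length := by
  classical
  calc Fintype.card V = (Finset.univ : Finset V).card := Finset.card_univ.symm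
    _ ≤ (p.toFinset ∪ q.toFinset).card :=
        Finset.card_le_card fun v _ => by
          simpa only [Finset.mem_union, List.mem_toFinset] using h v
    _ ≤ p.toFinset.card + q.toFinset.card := Finset.card_union_le _ _
    _ ≤ p.length + q.length := add_le_add p.toFinset_card_le q.toFinset_card_le

section OrthogonalPP

variable {V : Type*} {A : V → V → Prop} {P : Set (List V)} {a b : V}

theorem eq_of_mem_of_orthogonalPP {S : Set V} (hS : OrthogonalPP P S) {p : List V}
    (hp : p ∈ P) (haS : a ∈ S) (hbS : b ∈ S) (hap : a ∈ p) (hbp : b ∈ p) : a = b := by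
  obtain ⟨w, -, hw⟩ := hS p hp
  exact (hw a ⟨haS, hap⟩).trans (hw b ⟨hbS, hbp⟩).symm

theorem mem_or_mem_of_orthogonalPP_pair (hP : IsPathPartition A P) (hS : OrthogonalPP P {a, b})
    {p q : List V} (hp : p ∈ P) (hq : q ∈ P) (hap : a ∈ p) (hbq : b ∈ q) (v : V) :
    v ∈ p ∨ v ∈ q := by
  obtain ⟨r, hr, hvr⟩ := hP.2.2 v
  obtain ⟨w, ⟨rfl | rfl, hwr⟩, -⟩ := hS r hr
  · left
    by_contra hvp
    exact hP.2.1 r hr p hp (by rintro rfl; exact hvp hvr) w hwr hap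
  · right
    by_contra hvq
    exact hP.2.1 r hr q hq (by rintro rfl; exact hvq hvr) w hwr hbq

theorem exists_card_le_two_mul_length [Fintype V] (hP : IsPathPartition A P)
    (hS : OrthogonalPP P {a, b}) : ∃ p ∈ P, Fintype.card V ≤ 2 * p.length := by
  obtain ⟨p, hp, hap⟩ := hP.2.2 a
  obtain ⟨q, hq, hbq⟩ := hP.2.2 b
  have hcard := card_le_length_add_length (mem_or_mem_of_orthogonalPP_pair hP hS hp hq hap hbq)
  rcases le_total q.length p.length with hqp | hpq
  · exact ⟨p, hp, by omega⟩
  · exact ⟨q, hq, by omega⟩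

end OrthogonalPP

theorem DvecArc.endpoints_mem_of_le_length {k : ℕ} {p : List (ZMod (2*k+1))}
    (hp : IsDipath (DvecArc k) p) (hlen : k + 1 ≤ p.length) :
    ((0 : ℕ) : ZMod (2*k+1)) ∈ p ∧ ((2*k : ℕ) : ZMod (2*k+1)) ∈ p := by
  obtain ⟨hne, -, hchain⟩ := hp
  have hrise := head_add_mul_le_getLast_of_isChain ZMod.val 2 p hne
    (hchain.imp fun _ _ huv => huv.1)
  have hlast := (p.getLast hne).val_lt
  have hhead : p.head hne = ((0 : ℕ) : ZMod (2*k+1)) :=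
    ZMod.val_injective _ (by rw [ZMod.val_natCast_of_lt (by omega)]; omega)
  have hgetLast : p.getLast hne = ((2*k : ℕ) : ZMod (2*k+1)) :=
    ZMod.val_injective _ (by rw [ZMod.val_natCast_of_lt (by omega)]; omega)
  exact ⟨hhead ▸ p.head_mem hne, hgetLast ▸ p.getLast_mem hne⟩

/-- for `k ≥ 2`, `D⃗_{2k+1}` has no path partition orthogonal to the
maximum stable set `{x_0, x_{2k}}`. -/
theorem stmt_6 (k : ℕ) (hk : 2 ≤ k) :
    ¬ ∃ P : Set (List (ZMod (2*k+1))), IsPathPartition (DvecArc k) P ∧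
      OrthogonalPP P {((0 : ℕ) : ZMod (2*k+1)), ((2*k : ℕ) : ZMod (2*k+1))} := by
  rintro ⟨P, hP, hS⟩
  obtain ⟨p, hp, hlen⟩ := exists_card_le_two_mul_length hP hS
  rw [ZMod.card] at hlen
  obtain ⟨h0, h2k⟩ := DvecArc.endpoints_mem_of_le_length (hP.1 p hp) (by omega)
  have h := congrArg ZMod.val (eq_of_mem_of_orthogonalPP hS hp (Or.inl rfl) (Or.inr rfl) h0 h2k)
  rw [ZMod.val_natCast_of_lt (by omega), ZMod.val_natCast_of_lt (by omega)] at h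
  omega
end

section
/- For every k ≥ 2, every directed path of D⃗_{2k+1} that avoids the vertex x_0 has at most k vertices, and every directed path of D⃗_{2k+1} that avoids the vertex x_{2k} has at most k vertices. -/
lemma chain_grow {V : Type*} (f : V → ℕ) (A : V → V → Prop)
    (hA : ∀ u v, A u v → f u + 2 ≤ f v) :
    ∀ p : List V, p.Chain' A → ∀ h : p ≠ [],
      f (p.head h) + 2 * (p.length - 1) ≤ f (p.getLast h) := by
  intro p
  induction p with
  | nil => intro _ h; exact absurd rfl h
  | cons a l ih =>
    intro hc h
    cases l with
    | nil => simp
    | cons b l' =>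
      have hab : A a b := (List.isChain_cons_cons.mp hc).1
      have hcl : (b :: l').Chain' A := (List.isChain_cons_cons.mp hc).2
      have := ih hcl (by simp)
      have hlast : (a :: b :: l').getLast h = (b :: l').getLast (by simp) :=
        List.getLast_cons (by simp)
      rw [hlast]
      have h1 := hA a b hab
      simp only [List.head_cons] at this ⊢
      simp only [List.length_cons] at this ⊢
      omega

/-- for `k ≥ 2`, every directed path of `D⃗_{2k+1}` avoiding `x_0` has at
most `k` vertices, and likewise for paths avoiding `x_{2k}`. -/
theorem stmt_7 (k : ℕ) (hk : 2 ≤ k) (p : List (ZMod (2*k+1)))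
    (hp : IsDipath (DvecArc k) p) :
    (((0 : ℕ) : ZMod (2*k+1)) ∉ p → p.length ≤ k) ∧
    (((2*k : ℕ) : ZMod (2*k+1)) ∉ p → p.length ≤ k) := by
  obtain ⟨hne, hnd, hch⟩ := hp
  have hA : ∀ u v : ZMod (2*k+1), DvecArc k u v → u.val + 2 ≤ v.val :=
    fun u v h => h.1
  have key := chain_grow _ _ hA p hch hne
  have : NeZero (2*k+1) := ⟨by omega⟩
  have hlt : (p.getLast hne).val < 2*k+1 := ZMod.val_lt _
  have hL : 1 ≤ p.length := List.length_pos_iff.mpr hne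
  constructor
  · intro h0
    have hh : p.head hne ∈ p := List.head_mem hne
    have : (p.head hne).val ≠ 0 := by
      intro hv
      apply h0
      have : p.head hne = 0 := (ZMod.val_eq_zero _).mp hv
      simp only [Nat.cast_zero]
      rwa [← this]
    omega
  · intro h2k
    have hl : p.getLast hne ∈ p := List.getLast_mem hne
    have : (p.getLast hne).val ≠ 2*k := by
      intro hv
      apply h2k
      have : ((2*k : ℕ) : ZMod (2*k+1)) = p.getLast hne := by
        calc ((2*k : ℕ) : ZMod (2*k+1)) = (((p.getLast hne).val : ℕ) : ZMod (2*k+1)) := by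
              rw [hv]
          _ = p.getLast hne := by rw [ZMod.natCast_val, ZMod.cast_id]
      rw [this]; exact hl
    omega
end

section
/- Let k ≥ 3 and let D be a super-orientation of the complement of C_{2k+1}, with vertices labeled x_0,…,x_{2k} so that x_i and x_j are adjacent in the underlying graph if and only if j − i ≢ ±1 (mod 2k+1). Suppose that D contains no arc (x_j, x_i) with 0 ≤ i < j ≤ 2k−2 and no arc (x_j, x_i) with 2 ≤ i < j ≤ 2k. If D contains at least one of the arcs (x_{2k−1}, x_0), (x_{2k}, x_1), (x_{2k−2}, x_0), (x_{2k}, x_2), (x_{2k−1}, x_1), then D has a path partition into two directed paths that is orthogonal to {x_0, x_{2k}}. -/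
open List

def HasOrthogonalPairPartition {V : Type*} (A : V → V → Prop) (s t : V) : Prop :=
  ∃ p₁ p₂ : List V, p₁ ≠ p₂ ∧ IsPathPartition A {p₁, p₂} ∧ OrthogonalPP {p₁, p₂} {s, t}

theorem hasOrthogonalPairPartition_of_nodup {V : Type*} {A : V → V → Prop} {p q : List V}
    {s t : V} (hp : p.IsChain A) (hq : q.IsChain A) (hnodup : (p ++ q).Nodup)
    (hcover : ∀ v, v ∈ p ++ q) (hs : s ∈ p) (ht : t ∈ q) :
    HasOrthogonalPairPartition A s t := by
  obtain ⟨hpn, hqn, hdisj⟩ := nodup_append.1 hnodup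
  refine ⟨p, q, by rintro rfl; exact hdisj s hs s hs rfl, ⟨?_, ?_, ?_⟩, ?_⟩
  · rintro r (rfl | rfl)
    exacts [⟨ne_nil_of_mem hs, hpn, hp⟩, ⟨ne_nil_of_mem ht, hqn, hq⟩]
  · rintro r (rfl | rfl) r' (rfl | rfl) hne v hv hv'
    exacts [hne rfl, hdisj v hv v hv' rfl, hdisj v hv' v hv rfl, hne rfl]
  · intro v
    rcases mem_append.1 (hcover v) with h | h
    exacts [⟨p, .inl rfl, h⟩, ⟨q, .inr rfl, h⟩]
  · rintro r (rfl | rfl)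
    · refine ⟨s, ⟨.inl rfl, hs⟩, ?_⟩
      rintro v ⟨rfl | rfl, hv⟩
      exacts [rfl, absurd rfl (hdisj v hv v ht)]
    · refine ⟨t, ⟨.inr rfl, ht⟩, ?_⟩
      rintro v ⟨rfl | rfl, hv⟩
      exacts [absurd rfl (hdisj v hs v hv), rfl]

theorem ZMod.natCast_injOn_Iio (n : ℕ) : Set.InjOn (Nat.cast : ℕ → ZMod n) (Set.Iio n) :=
  fun a ha b hb h => by
    simpa only [ZMod.val_natCast_of_lt ha, ZMod.val_natCast_of_lt hb] using congrArg ZMod.val h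

theorem ZMod.nodup_map_natCast_range (n : ℕ) :
    ((range n).map (Nat.cast : ℕ → ZMod n)).Nodup :=
  nodup_range.map_on fun _ ha _ hb => ZMod.natCast_injOn_Iio n (mem_range.1 ha) (mem_range.1 hb)

theorem ZMod.mem_map_natCast_range {n : ℕ} [NeZero n] (v : ZMod n) :
    v ∈ (range n).map (Nat.cast : ℕ → ZMod n) :=
  mem_map.2 ⟨v.val, mem_range.2 v.val_lt, ZMod.natCast_zmod_val v⟩

theorem hasOrthogonalPairPartition_of_perm_range {n : ℕ} [NeZero n]
    {A : ZMod n → ZMod n → Prop} {l₁ l₂ : List ℕ} {s t : ℕ} (hperm : l₁ ++ l₂ ~ range n)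
    (h₁ : l₁.IsChain fun i j : ℕ => A i j) (h₂ : l₂.IsChain fun i j : ℕ => A i j)
    (hs : s ∈ l₁) (ht : t ∈ l₂) : HasOrthogonalPairPartition A (s : ZMod n) t := by
  have hperm' : l₁.map Nat.cast ++ l₂.map Nat.cast ~ (range n).map (Nat.cast : ℕ → ZMod n) := by
    simpa only [map_append] using hperm.map Nat.cast
  exact hasOrthogonalPairPartition_of_nodup ((isChain_map _).2 h₁) ((isChain_map _).2 h₂)
    (hperm'.nodup_iff.2 (ZMod.nodup_map_natCast_range n))
    (fun v => hperm'.mem_iff.2 (ZMod.mem_map_natCast_range v)) (mem_map_of_mem hs)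
    (mem_map_of_mem ht)

theorem range'_two_append_range'_two_perm (k : ℕ) :
    range' 0 (k + 1) 2 ++ range' 1 k 2 ~ range (2 * k + 1) := by
  refine (perm_ext_iff_of_nodup ?_ nodup_range).2 fun m => ?_
  · refine nodup_append.2 ⟨nodup_range' 2, nodup_range' 2, ?_⟩
    rintro _ ha _ hb
    obtain ⟨i, -, rfl⟩ := mem_range'.1 ha
    obtain ⟨j, -, rfl⟩ := mem_range'.1 hb
    omega
  · simp only [mem_append, mem_range', mem_range]
    constructor
    · rintro (⟨i, hi, rfl⟩ | ⟨i, hi, rfl⟩) <;> omega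
    · intro hm
      obtain ⟨r, rfl | rfl⟩ := Nat.even_or_odd' m
      exacts [.inl ⟨r, by omega, by omega⟩, .inr ⟨r, by omega, by omega⟩]

theorem List.IsChain.range'_append_cons {R : ℕ → ℕ → Prop} {s n step t : ℕ} {l : List ℕ}
    (h₁ : IsChain R (range' s (n + 1) step)) (h : R (s + step * n) t) (h₂ : IsChain R (t :: l)) :
    IsChain R (range' s (n + 1) step ++ t :: l) := by
  rw [range'_concat] at h₁ ⊢
  simpa using isChain_append_cons_cons.2 ⟨h₁, h, h₂⟩

theorem ZMod.natCast_nonadjacent_of_add_two_le {n i j : ℕ} (hij : i + 2 ≤ j) (hj : j < n)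
    (hwrap : 0 < i ∨ j + 1 < n) :
    (i : ZMod n) ≠ j ∧ (j : ZMod n) - i ≠ 1 ∧ (i : ZMod n) - j ≠ 1 := by
  have hinj := ZMod.natCast_injOn_Iio n
  refine ⟨fun h => ?_, fun h => ?_, fun h => ?_⟩
  · have : i = j := hinj (show i < n by omega) hj h
    omega
  · have : i + 1 = j := hinj (show i + 1 < n by omega) hj (by push_cast; linear_combination -h)
    omega
  · have key : (i : ZMod n) = ((j + 1 : ℕ) : ZMod n) := by push_cast; linear_combination h
    rw [ZMod.natCast_eq_natCast_iff', Nat.mod_eq_of_lt (by omega : i < n)] at key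
    rcases (show j + 1 ≤ n from hj).lt_or_eq with hlt | heq
    · rw [Nat.mod_eq_of_lt hlt] at key
      omega
    · rw [heq, Nat.mod_self] at key
      omega

def ForwardArcs (k : ℕ) (A : ZMod (2 * k + 1) → ZMod (2 * k + 1) → Prop) : Prop :=
  ∀ i j : ℕ, i + 2 ≤ j → j ≤ 2 * k → (j ≤ 2 * k - 2 ∨ 2 ≤ i) → A i j

theorem forwardArcs_of_superOrientation {k : ℕ} {A : ZMod (2 * k + 1) → ZMod (2 * k + 1) → Prop}
    (hso : ∀ u v : ZMod (2 * k + 1), (A u v ∨ A v u) ↔ (u ≠ v ∧ v - u ≠ 1 ∧ u - v ≠ 1))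
    (h1 : ∀ i j : ℕ, i < j → j ≤ 2 * k - 2 → ¬ A (j : ZMod (2 * k + 1)) (i : ZMod (2 * k + 1)))
    (h2 : ∀ i j : ℕ, 2 ≤ i → i < j → j ≤ 2 * k →
      ¬ A (j : ZMod (2 * k + 1)) (i : ZMod (2 * k + 1))) :
    ForwardArcs k A := by
  intro i j hij hj hside
  rcases (hso i j).2 (ZMod.natCast_nonadjacent_of_add_two_le hij (by omega) (by omega)) with h | h
  · exact h
  · rcases hside with hs | hs
    exacts [absurd h (h1 i j (by omega) hs), absurd h (h2 i j hs (by omega) hj)]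

namespace ForwardArcs

variable {k : ℕ} {A : ZMod (2 * k + 1) → ZMod (2 * k + 1) → Prop}

theorem isChain_range' (hA : ForwardArcs k A) (hk : 3 ≤ k) {s n : ℕ}
    (h : s + 2 * n ≤ 2 * k + 2) : (range' s n 2).IsChain fun i j : ℕ => A i j :=
  (List.isChain_range' s n 2).imp_of_mem_imp fun a b _ hb hab => by
    obtain ⟨i, hi, rfl⟩ := mem_range'.1 hb
    exact hab ▸ hA a _ (by omega) (by omega) (by omega)

theorem hasOrthogonalPairPartition_of_arc_pred_zero (hA : ForwardArcs k A) (hk : 3 ≤ k)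
    (h : A ((2 * k - 1 : ℕ) : ZMod (2 * k + 1)) ((0 : ℕ) : ZMod (2 * k + 1))) :
    HasOrthogonalPairPartition A ((0 : ℕ) : ZMod (2 * k + 1)) ((2 * k : ℕ) : ZMod (2 * k + 1)) := by
  obtain ⟨m, rfl⟩ : ∃ m, k = m + 1 := ⟨k - 1, by omega⟩
  have hperm : (range' 1 (m + 1) 2 ++ 0 :: range' 2 m 2) ++ [2 * (m + 1)] ~
      range (2 * (m + 1) + 1) := by
    have hevens : range' 0 (m + 1 + 1) 2 = 0 :: (range' 2 m 2 ++ [2 * (m + 1)]) := by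
      rw [range'_succ, range'_concat]; ring_nf
    refine (perm_iff_count.2 fun a => ?_).trans (range'_two_append_range'_two_perm (m + 1))
    rw [hevens]
    simp only [count_append, count_cons, count_nil]
    omega
  refine hasOrthogonalPairPartition_of_perm_range hperm ?_ (isChain_singleton _) (by simp)
    (by simp)
  refine (hA.isChain_range' hk (by omega)).range'_append_cons ?_
    (hA.isChain_range' (s := 0) (n := m + 1) hk (by omega))
  convert h using 3
  omega

theorem hasOrthogonalPairPartition_of_arc_last_one (hA : ForwardArcs k A) (hk : 3 ≤ k)
    (h : A ((2 * k : ℕ) : ZMod (2 * k + 1)) ((1 : ℕ) : ZMod (2 * k + 1))) :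
    HasOrthogonalPairPartition A ((0 : ℕ) : ZMod (2 * k + 1)) ((2 * k : ℕ) : ZMod (2 * k + 1)) := by
  obtain ⟨m, rfl⟩ : ∃ m, k = m + 1 := ⟨k - 1, by omega⟩
  refine hasOrthogonalPairPartition_of_perm_range (l₁ := [0])
    (l₂ := range' 2 (m + 1) 2 ++ 1 :: range' 3 m 2) (range'_two_append_range'_two_perm (m + 1))
    (isChain_singleton _) ?_ (by simp)
    (mem_append_left _ (mem_range'.2 ⟨m, by omega, by omega⟩))
  refine (hA.isChain_range' hk (by omega)).range'_append_cons ?_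
    (hA.isChain_range' (s := 1) (n := m + 1) hk (by omega))
  convert h using 3
  omega

theorem hasOrthogonalPairPartition_of_arc_pred_one (hA : ForwardArcs k A) (hk : 3 ≤ k)
    (h : A ((2 * k - 1 : ℕ) : ZMod (2 * k + 1)) ((1 : ℕ) : ZMod (2 * k + 1))) :
    HasOrthogonalPairPartition A ((0 : ℕ) : ZMod (2 * k + 1)) ((2 * k : ℕ) : ZMod (2 * k + 1)) := by
  obtain ⟨m, rfl⟩ : ∃ m, k = m + 2 := ⟨k - 2, by omega⟩
  have hperm : [0, 2] ++ (range' 3 (m + 1) 2 ++ 1 :: range' 4 (m + 1) 2) ~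
      range (2 * (m + 2) + 1) :=
    (perm_iff_count.2 fun a => by simp only [count_append, count_cons, count_nil]; omega :
      _ ~ (0 :: 2 :: range' 4 (m + 1) 2) ++ 1 :: range' 3 (m + 1) 2).trans
      (range'_two_append_range'_two_perm (m + 2))
  refine hasOrthogonalPairPartition_of_perm_range hperm
    (isChain_pair.2 (hA 0 2 le_rfl (by omega) (by omega))) ?_ (by simp)
    (mem_append_right _ (mem_cons_of_mem _ (mem_range'.2 ⟨m, by omega, by omega⟩)))
  refine (hA.isChain_range' hk (by omega)).range'_append_cons ?_
    (isChain_cons_cons.2 ⟨hA 1 4 (by omega) (by omega) (by omega),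
      hA.isChain_range' (s := 4) (n := m + 1) hk (by omega)⟩)
  convert h using 3
  omega

end ForwardArcs

/-- let `D` be a super-orientation of `(C_{2k+1})ᶜ`, `k ≥ 3`, with no arc
`(x_j, x_i)` for `0 ≤ i < j ≤ 2k-2` nor for `2 ≤ i < j ≤ 2k`. If `D` contains one of the
arcs `(x_{2k-1}, x_0)`, `(x_{2k}, x_1)`, `(x_{2k-2}, x_0)`, `(x_{2k}, x_2)`,
`(x_{2k-1}, x_1)`, then `D` has a path partition into two directed paths orthogonal to
`{x_0, x_{2k}}`. -/
theorem stmt_10 (k : ℕ) (hk : 3 ≤ k)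
    (A : ZMod (2*k+1) → ZMod (2*k+1) → Prop)
    (hso : ∀ u v : ZMod (2*k+1),
      (A u v ∨ A v u) ↔ (u ≠ v ∧ v - u ≠ 1 ∧ u - v ≠ 1))
    (h1 : ∀ i j : ℕ, i < j → j ≤ 2*k-2 →
      ¬ A ((j : ZMod (2*k+1))) ((i : ZMod (2*k+1))))
    (h2 : ∀ i j : ℕ, 2 ≤ i → i < j → j ≤ 2*k →
      ¬ A ((j : ZMod (2*k+1))) ((i : ZMod (2*k+1))))
    (harc :
      A ((2*k-1 : ℕ) : ZMod (2*k+1)) ((0 : ℕ) : ZMod (2*k+1)) ∨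
      A ((2*k : ℕ) : ZMod (2*k+1)) ((1 : ℕ) : ZMod (2*k+1)) ∨
      A ((2*k-2 : ℕ) : ZMod (2*k+1)) ((0 : ℕ) : ZMod (2*k+1)) ∨
      A ((2*k : ℕ) : ZMod (2*k+1)) ((2 : ℕ) : ZMod (2*k+1)) ∨
      A ((2*k-1 : ℕ) : ZMod (2*k+1)) ((1 : ℕ) : ZMod (2*k+1))) :
    ∃ p₁ p₂ : List (ZMod (2*k+1)), p₁ ≠ p₂ ∧
      IsPathPartition A {p₁, p₂} ∧
      OrthogonalPP {p₁, p₂} {((0 : ℕ) : ZMod (2*k+1)), ((2*k : ℕ) : ZMod (2*k+1))} := by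
  have hA := forwardArcs_of_superOrientation hso h1 h2
  rcases harc with h | h | h | h | h
  · exact hA.hasOrthogonalPairPartition_of_arc_pred_zero hk h
  · exact hA.hasOrthogonalPairPartition_of_arc_last_one hk h
  · exact absurd h (h1 0 (2 * k - 2) (by omega) le_rfl)
  · exact absurd h (h2 2 (2 * k) le_rfl (by omega) le_rfl)
  · exact hA.hasOrthogonalPairPartition_of_arc_pred_one hk h
end

section
/- For every k ≥ 3, the complement of the odd cycle C_{2k+1} contains no induced cycle of odd length at least 5. -/
/-!
Complementing, `C_n` as an induced subgraph of `C_mᶜ` becomes `C_nᶜ`, which is `(n - 3)`-regular,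
as an induced subgraph of `C_m`, whose degrees are `2`. Hence `n = 5`, and then every vertex of the
induced subgraph keeps both of its `C_m`-neighbours; as `C_m` is connected, the induced subgraph is
all of `C_m`, so `m = n = 5`.
-/

namespace SimpleGraph

variable {V W : Type*} {G : SimpleGraph V} {H : SimpleGraph W}

theorem compl_induce (G : SimpleGraph V) (s : Set V) : (G.induce s)ᶜ = Gᶜ.induce s := by
  ext v w
  simp [Subtype.val_inj]

def Iso.compl (e : G ≃g H) : Gᶜ ≃g Hᶜ where
  toEquiv := e.toEquiv
  map_rel_iff' := by simp [e.injective.ne_iff, e.map_adj_iff]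

theorem map_neighborFinset_induce_subset {s : Set V} (v : s) [Fintype (G.neighborSet v)]
    [Fintype ((G.induce s).neighborSet v)] :
    ((G.induce s).neighborFinset v).map (.subtype (· ∈ s)) ⊆ G.neighborFinset v := by
  intro w
  simp +contextual

theorem degree_induce_le {s : Set V} (v : s) [Fintype (G.neighborSet v)]
    [Fintype ((G.induce s).neighborSet v)] : (G.induce s).degree v ≤ G.degree v := by
  simpa using Finset.card_le_card (map_neighborFinset_induce_subset v)

theorem neighborSet_subset_of_degree_induce_eq {s : Set V} {v : s} [Fintype (G.neighborSet v)]
    [Fintype ((G.induce s).neighborSet v)] (h : (G.induce s).degree v = G.degree v) :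
    G.neighborSet v ⊆ s := by
  have hmap := Finset.eq_of_subset_of_card_le (map_neighborFinset_induce_subset v)
    (by simpa using h.ge)
  intro w hw
  replace hw : w ∈ G.neighborFinset v := by simpa using hw
  rw [← hmap] at hw
  simp only [Finset.mem_map, Function.Embedding.coe_subtype] at hw
  obtain ⟨u, -, rfl⟩ := hw
  exact u.2

theorem Preconnected.eq_univ_of_neighborSet_subset (hG : G.Preconnected) {s : Set V}
    (hs : ∀ v ∈ s, G.neighborSet v ⊆ s) {v : V} (hv : v ∈ s) : s = Set.univ := by
  refine Set.eq_univ_of_forall fun w => (hG v w).elim fun p => ?_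
  induction p with
  | nil => exact hv
  | cons h _ ih => exact ih (hs _ hv h)

theorem degree_compl_cycleGraph (n : ℕ) (v : Fin (n + 3))
    [Fintype ((cycleGraph (n + 3))ᶜ.neighborSet v)] : (cycleGraph (n + 3))ᶜ.degree v = n := by
  rw [degree_compl, cycleGraph_degree_three_le, Fintype.card_fin]
  omega

theorem eq_five_of_compl_cycleGraph_induce_iso {m n : ℕ} (hm : 3 ≤ m) (hn : 5 ≤ n)
    {s : Set (Fin m)} (e : (cycleGraph m)ᶜ.induce s ≃g cycleGraph n) : n = 5 ∧ m = 5 := by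
  classical
  obtain ⟨m, rfl⟩ : ∃ j, m = j + 3 := ⟨m - 3, by omega⟩
  obtain ⟨n, rfl⟩ : ∃ j, n = j + 3 := ⟨n - 3, by omega⟩
  have e' : (cycleGraph (m + 3)).induce s ≃g (cycleGraph (n + 3))ᶜ := by
    simpa [← compl_induce] using e.compl
  have hdeg (v : s) : ((cycleGraph (m + 3)).induce s).degree v = n := by
    rw [← e'.degree_eq v, degree_compl_cycleGraph]
  obtain ⟨v⟩ : Nonempty s := ⟨e'.symm 0⟩
  have hn2 : n = 2 := by
    have := (hdeg v).symm.trans_le (degree_induce_le v)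
    rw [cycleGraph_degree_three_le] at this
    omega
  subst hn2
  have hs : s = Set.univ := by
    refine cycleGraph_connected.preconnected.eq_univ_of_neighborSet_subset (fun w hw => ?_) v.2
    exact neighborSet_subset_of_degree_induce_eq (v := ⟨w, hw⟩)
      (by rw [hdeg, cycleGraph_degree_three_le])
  subst hs
  exact ⟨rfl, by simpa using Nat.card_congr e'.toEquiv⟩

end SimpleGraph

open SimpleGraph

/-- for `k ≥ 3`, the complement of `C_{2k+1}` contains no induced cycle of
odd length at least 5. -/
theorem stmt_12 (k : ℕ) (hk : 3 ≤ k) :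
    ¬ ∃ (n : ℕ) (s : Set (Fin (2*k+1))),
      5 ≤ n ∧ Odd n ∧
      Nonempty ((((cycleGraph (2*k+1))ᶜ).induce s) ≃g cycleGraph n) := by
  rintro ⟨n, s, hn, -, ⟨e⟩⟩
  have := (eq_five_of_compl_cycleGraph_induce_iso (by omega) hn e).2
  omega
end
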